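/- arXiv:2410.23045 — 6 statements merged into one kernel-verified Lean document; each statement's English description precedes it below -/
import Mathlib

section
/- Let G = (V,E) be the hypergraph whose edge set E consists of all subsets of V of cardinality |V| − 1, where |V| ≥ 3. Then the nest-set width of G equals |V| − 1, i.e., every nest-set elimination order of G has some element of cardinality at least |V| − 1. -/
open Finset

/-- `N` is a nest-set of the hypergraph with edge set `E`: the family
`{e \ N : e ∈ E, e ∩ N ≠ ∅}` is totally ordered by inclusion. -/
def IsNestSet {V : Type*} [DecidableEq V] (E : Finset (Finset V)) (N : Finset V) : Prop :=
  ∀ e₁ ∈ E, ∀ e₂ ∈ E, (e₁ ∩ N).Nonempty → (e₂ ∩ N).Nonempty →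
    e₁ \ N ⊆ e₂ \ N ∨ e₂ \ N ⊆ e₁ \ N

/-- `v` is a nest point: the edges containing `v` are totally ordered by inclusion. -/
def IsNestPoint {V : Type*} (E : Finset (Finset V)) (v : V) : Prop :=
  ∀ e₁ ∈ E, ∀ e₂ ∈ E, v ∈ e₁ → v ∈ e₂ → e₁ ⊆ e₂ ∨ e₂ ⊆ e₁

/-- The edge set of the hypergraph `G - N`. -/
def hreduce {V : Type*} [DecidableEq V] (E : Finset (Finset V)) (N : Finset V) :
    Finset (Finset V) :=
  (E.image (fun e => e \ N)).filter (fun e => 2 ≤ e.card)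

/-- `gap(G, N) = max { |N| - |e ∩ N| : e ∈ E, e ∩ N ≠ ∅ }`. -/
def hgap {V : Type*} [DecidableEq V] (E : Finset (Finset V)) (N : Finset V) : ℕ :=
  (E.filter (fun e => (e ∩ N).Nonempty)).sup (fun e => N.card - (e ∩ N).card)

/-- `L = N₁, …, N_t` is a nest-set elimination order of the hypergraph with node set `Vs`
and edge set `E`. -/
def IsElimOrder {V : Type*} [DecidableEq V] (Vs : Finset V) (E : Finset (Finset V))
    (L : List (Finset V)) : Prop :=
  L.Pairwise Disjoint ∧ (∀ N ∈ L, N.Nonempty) ∧ L.foldr (· ∪ ·) ∅ = Vs ∧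
  ∀ i : Fin L.length, IsNestSet ((L.take i).foldl hreduce E) (L.get i)

/-- The nest-set width of an elimination order: maximum cardinality of an element. -/
def nswOf {V : Type*} (L : List (Finset V)) : ℕ := (L.map Finset.card).foldr max 0

/-- The nest-set gap of an elimination order: max over `i` of
`gap(G - N₁ - ⋯ - N_{i-1}, N_i)`. -/
def nsgOf {V : Type*} [DecidableEq V] (E : Finset (Finset V)) (L : List (Finset V)) : ℕ :=
  ((List.range L.length).map
    (fun i => hgap ((L.take i).foldl hreduce E) (L.getD i ∅))).foldr max 0

/-- Distinct `u, v ∉ N` would give incomparable traces `Vs.erase u \ N ∋ v` and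
`Vs.erase v \ N ∋ u`. -/
theorem IsNestSet.card_le_succ {V : Type*} [DecidableEq V] {Vs N : Finset V}
    {E : Finset (Finset V)} (hN : IsNestSet E N) (hNVs : N ⊆ Vs) (hNne : N.Nonempty)
    (hE : ∀ u ∈ Vs, Vs.erase u ∈ E) : Vs.card ≤ N.card + 1 := by
  by_contra! hlt
  have hout : 1 < (Vs \ N).card := by rw [card_sdiff_of_subset hNVs]; omega
  obtain ⟨u, hu, v, hv, huv⟩ := one_lt_card.mp hout
  rw [mem_sdiff] at hu hv
  obtain ⟨x, hx⟩ := hNne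
  have meets : ∀ w ∉ N, (Vs.erase w ∩ N).Nonempty := fun w hw =>
    ⟨x, mem_inter.mpr ⟨mem_erase.mpr ⟨ne_of_mem_of_not_mem hx hw, hNVs hx⟩, hx⟩⟩
  rcases hN _ (hE u hu.1) _ (hE v hv.1) (meets u hu.2) (meets v hv.2) with h | h
  · simpa using h (by simp [huv.symm, hv.1, hv.2] : v ∈ Vs.erase u \ N)
  · simpa using h (by simp [huv, hu.1, hu.2] : u ∈ Vs.erase v \ N)

theorem IsElimOrder.ne_nil {V : Type*} [DecidableEq V] {Vs : Finset V} {E : Finset (Finset V)}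
    {L : List (Finset V)} (hL : IsElimOrder Vs E L) (hVs : Vs.Nonempty) : L ≠ [] := by
  rintro rfl
  simp [← hL.2.2.1] at hVs

theorem IsElimOrder.isNestSet_head {V : Type*} [DecidableEq V] {Vs : Finset V}
    {E : Finset (Finset V)} {L : List (Finset V)} (hL : IsElimOrder Vs E L) (hL0 : L ≠ []) :
    IsNestSet E (L.head hL0) := by
  cases L with
  | nil => contradiction
  | cons N L => simpa using hL.2.2.2 ⟨0, by simp⟩

theorem mem_powerset_univ_filter_card_erase {V : Type*} [Fintype V] [DecidableEq V] (u : V) :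
    univ.erase u ∈ univ.powerset.filter (fun e : Finset V => e.card = Fintype.card V - 1) := by
  simp [card_erase_of_mem]

/-- For the hypergraph `G = (V, E)` whose edges are all subsets of `V` of cardinality
`|V| - 1` (with `|V| ≥ 3`), every nest-set elimination order of `G` has an element of
cardinality at least `|V| - 1`, i.e. `nsw(G) = |V| - 1`. -/
theorem stmt_2 {V : Type*} [Fintype V] [DecidableEq V] (h3 : 3 ≤ Fintype.card V)
    (L : List (Finset V))
    (hL : IsElimOrder Finset.univ
      (Finset.univ.powerset.filter (fun e : Finset V => e.card = Fintype.card V - 1)) L) :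
    ∃ N ∈ L, Fintype.card V - 1 ≤ N.card := by
  have hL0 : L ≠ [] := hL.ne_nil (univ_nonempty_iff.mpr (Fintype.card_pos_iff.mp (by omega)))
  refine ⟨L.head hL0, L.head_mem hL0, ?_⟩
  have hcard := (hL.isNestSet_head hL0).card_le_succ (subset_univ _)
    (hL.2.1 _ (L.head_mem hL0)) fun u _ => mem_powerset_univ_filter_card_erase u
  rw [card_univ] at hcard
  omega
end

section
/- Let n ≥ 5 and let G be the graph on nodes {v₁,…,v_n} with edge set {{v₁,v_i}, {v₂,v_i} : 3 ≤ i ≤ n}. Then every nest-set of G either contains v₁ or contains v₂; moreover if a nest-set contains v₁ but not v₂ (or v₂ but not v₁), it must contain all of v₃,…,v_n. Consequently nsw(G) = n − 1. -/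
/-!
In a nest-set `N`, two edges `{p, x}` and `{q, y}` with `p, q ∈ N` and `x, y ∉ N` leave the traces
`{x}` and `{y}`, which are comparable only if `x = y`. In the graph of the theorem every node other
than the hubs `v₁, v₂` is joined to both hubs, and playing this observation against these edges shows
that a nonempty nest-set misses at most one node; the first set of any elimination order is such a
nest-set, so it has at least `n - 1` nodes. Conversely, for any hypergraph, `V \ {v}` followed by
`{v}` is an elimination order, since removing all nodes but one leaves no edge.
-/

open Finset

section NestSet

variable {V : Type*} [DecidableEq V]

theorem IsNestSet.eq_of_pair_mem {E : Finset (Finset V)} {N : Finset V} (hN : IsNestSet E N)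
    {p q x y : V} (hpx : {p, x} ∈ E) (hqy : {q, y} ∈ E)
    (hp : p ∈ N) (hq : q ∈ N) (hx : x ∉ N) (hy : y ∉ N) : x = y := by
  have hpx' : ({p, x} : Finset V) \ N = {x} := by ext; aesop
  have hqy' : ({q, y} : Finset V) \ N = {y} := by ext; aesop
  have := hN _ hpx _ hqy ⟨p, by simp [hp]⟩ ⟨q, by simp [hq]⟩
  rw [hpx', hqy'] at this
  rcases this with h | h
  · exact Finset.singleton_subset_singleton.1 h
  · exact (Finset.singleton_subset_singleton.1 h).symm

theorem isNestSet_empty_edges (N : Finset V) : IsNestSet ∅ N := by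
  simp [IsNestSet]

theorem IsElimOrder.exists_nonempty_isNestSet {Vs : Finset V}
    {E : Finset (Finset V)} {L : List (Finset V)} (hL : IsElimOrder Vs E L) (hVs : Vs.Nonempty) :
    ∃ N ∈ L, N.Nonempty ∧ IsNestSet E N := by
  obtain ⟨-, hne, hcov, hnest⟩ := hL
  rcases L with _ | ⟨N, L⟩
  · simp [← hcov] at hVs
  · exact ⟨N, List.mem_cons_self, hne N List.mem_cons_self, hnest ⟨0, Nat.succ_pos _⟩⟩

theorem isNestSet_compl_singleton [Fintype V] (E : Finset (Finset V)) (b : V) :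
    IsNestSet E {b}ᶜ := by
  intro e₁ _ e₂ _ _ _
  have key : ∀ e : Finset V, e \ {b}ᶜ ⊆ {b} := fun e x hx => by simp_all
  rcases Finset.subset_singleton_iff.1 (key e₁) with h₁ | h₁ <;>
    rcases Finset.subset_singleton_iff.1 (key e₂) with h₂ | h₂ <;> simp [h₁, h₂]

theorem hreduce_compl_singleton [Fintype V] (E : Finset (Finset V)) (b : V) :
    hreduce E {b}ᶜ = ∅ := by
  refine Finset.filter_false_of_mem fun e he => ?_
  obtain ⟨e', -, rfl⟩ := Finset.mem_image.1 he
  have : e' \ {b}ᶜ ⊆ {b} := fun x hx => by simp_all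
  have := Finset.card_le_card this
  simp only [Finset.card_singleton] at this
  omega

theorem isElimOrder_compl_singleton [Fintype V] [Nontrivial V] (E : Finset (Finset V)) (b : V) :
    IsElimOrder Finset.univ E [{b}ᶜ, {b}] := by
  refine ⟨?_, ?_, ?_, ?_⟩
  · simp [disjoint_compl_left]
  · intro N hN
    simp only [List.mem_cons, List.not_mem_nil, or_false] at hN
    rcases hN with rfl | rfl
    · obtain ⟨a, hab⟩ := exists_ne b
      exact ⟨a, by simpa using hab⟩
    · exact Finset.singleton_nonempty b
  · simp
  · rintro ⟨_ | _ | _, hi⟩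
    · exact isNestSet_compl_singleton E b
    · simpa [hreduce_compl_singleton] using isNestSet_empty_edges {b}
    · simp at hi

theorem exists_ne_ne_ne_of_four_le_card [Fintype V] (hV : 4 ≤ Fintype.card V) (a b i : V) :
    ∃ j : V, j ≠ a ∧ j ≠ b ∧ j ≠ i := by
  obtain ⟨j, -, hj⟩ := Finset.exists_mem_notMem_of_card_lt_card (s := {a, b, i}) (t := Finset.univ)
    (by have := Finset.card_le_three (a := a) (b := b) (c := i); rw [Finset.card_univ]; omega)
  exact ⟨j, by simp_all⟩

/-- The hypergraph contains the complete bipartite graph between `{a, b}` and the other nodes. -/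
def IsHubPair (E : Finset (Finset V)) (a b : V) : Prop :=
  ∀ v, v ≠ a → v ≠ b → {a, v} ∈ E ∧ {b, v} ∈ E

namespace IsHubPair

variable {E : Finset (Finset V)} {N : Finset V} {a b : V}

theorem symm (hE : IsHubPair E a b) : IsHubPair E b a :=
  fun v hva hvb => (hE v hvb hva).symm

theorem mem_or_mem (hE : IsHubPair E a b) (hab : a ≠ b) (hN : IsNestSet E N)
    (hne : N.Nonempty) : a ∈ N ∨ b ∈ N := by
  by_contra! h
  obtain ⟨v, hv⟩ := hne
  have hva : v ≠ a := by rintro rfl; exact h.1 hv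
  have hvb : v ≠ b := by rintro rfl; exact h.2 hv
  have hav := (hE v hva hvb).1
  have hbv := (hE v hva hvb).2
  rw [Finset.pair_comm] at hav hbv
  exact hab (hN.eq_of_pair_mem hav hbv hv hv h.1 h.2)

theorem mem_or_mem_of_mem (hE : IsHubPair E a b) (hN : IsNestSet E N) (ha : a ∈ N)
    {i j : V} (hia : i ≠ a) (hib : i ≠ b) (hja : j ≠ a) (hjb : j ≠ b) (hij : i ≠ j) :
    i ∈ N ∨ j ∈ N := by
  by_contra! h
  exact hij (hN.eq_of_pair_mem (hE i hia hib).1 (hE j hja hjb).1 ha ha h.1 h.2)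

variable [Fintype V]

/-- Otherwise some third node `j ∈ N` makes the traces `{i}` of `{a, i}` and `{b}` of `{j, b}`
incomparable. -/
theorem mem_of_mem_of_notMem (hE : IsHubPair E a b) (hV : 4 ≤ Fintype.card V)
    (hN : IsNestSet E N) (ha : a ∈ N) (hb : b ∉ N) {i : V} (hia : i ≠ a) (hib : i ≠ b) :
    i ∈ N := by
  by_contra hi
  obtain ⟨j, hja, hjb, hji⟩ := exists_ne_ne_ne_of_four_le_card hV a b i
  have hj : j ∈ N := (hE.mem_or_mem_of_mem hN ha hia hib hja hjb hji.symm).resolve_left hi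
  have hjb' := (hE j hja hjb).2
  rw [Finset.pair_comm] at hjb'
  exact hib (hN.eq_of_pair_mem (hE i hia hib).1 hjb' ha hj hi hb)

theorem mem_or_mem_of_ne_of_mem (hE : IsHubPair E a b) (hV : 4 ≤ Fintype.card V)
    (hN : IsNestSet E N) (ha : a ∈ N) {y z : V} (hyz : y ≠ z) : y ∈ N ∨ z ∈ N := by
  by_contra! h
  have hya : y ≠ a := by rintro rfl; exact h.1 ha
  have hza : z ≠ a := by rintro rfl; exact h.2 ha
  by_cases hb : b ∈ N
  · have hyb : y ≠ b := by rintro rfl; exact h.1 hb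
    have hzb : z ≠ b := by rintro rfl; exact h.2 hb
    exact h.1 ((hE.mem_or_mem_of_mem hN ha hya hyb hza hzb hyz).resolve_right h.2)
  · rcases ne_or_eq y b with hyb | rfl
    · exact h.1 (hE.mem_of_mem_of_notMem hV hN ha hb hya hyb)
    · exact h.2 (hE.mem_of_mem_of_notMem hV hN ha hb hza hyz.symm)

theorem mem_or_mem_of_ne (hE : IsHubPair E a b) (hab : a ≠ b) (hV : 4 ≤ Fintype.card V)
    (hN : IsNestSet E N) (hne : N.Nonempty) {y z : V} (hyz : y ≠ z) : y ∈ N ∨ z ∈ N := by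
  rcases hE.mem_or_mem hab hN hne with ha | hb
  · exact hE.mem_or_mem_of_ne_of_mem hV hN ha hyz
  · exact hE.symm.mem_or_mem_of_ne_of_mem hV hN hb hyz

theorem card_le_card_add_one (hE : IsHubPair E a b) (hab : a ≠ b) (hV : 4 ≤ Fintype.card V)
    (hN : IsNestSet E N) (hne : N.Nonempty) : Fintype.card V ≤ N.card + 1 := by
  have : Nᶜ.card ≤ 1 := Finset.card_le_one.2 fun y hy z hz => by
    by_contra hyz
    simp only [Finset.mem_compl] at hy hz
    exact (hE.mem_or_mem_of_ne hab hV hN hne hyz).elim hy hz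
  rw [Finset.card_compl] at this
  have := N.card_le_univ
  omega

end IsHubPair

end NestSet

theorem Fin.two_le_val_iff {n : ℕ} {i : Fin (n + 2)} : 2 ≤ (i : ℕ) ↔ i ≠ 0 ∧ i ≠ 1 := by
  simp only [Nat.two_le_iff, ne_eq, Fin.ext_iff, Fin.val_zero, Fin.val_one]

/-- For `n ≥ 5` (here `m = n + 5`), the graph on nodes `Fin m` with edges `{v₁, v_i}` and
`{v₂, v_i}` for `3 ≤ i ≤ m` (indices `0`, `1`, and `i` with `i.val ≥ 2`): every nonempty
nest-set contains node `0` or node `1`; if it contains exactly one of them, it contains all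
nodes `i` with `i.val ≥ 2`; and `nsw(G) = m - 1`. -/
theorem stmt_3 (n : ℕ) :
    let E : Finset (Finset (Fin (n + 5))) :=
      (Finset.univ.filter (fun i : Fin (n + 5) => 2 ≤ (i : ℕ))).image
        (fun i => ({0, i} : Finset (Fin (n + 5)))) ∪
      (Finset.univ.filter (fun i : Fin (n + 5) => 2 ≤ (i : ℕ))).image
        (fun i => ({1, i} : Finset (Fin (n + 5))))
    (∀ N : Finset (Fin (n + 5)), IsNestSet E N → N.Nonempty → (0 : Fin (n + 5)) ∈ N ∨ (1 : Fin (n + 5)) ∈ N) ∧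
    (∀ N : Finset (Fin (n + 5)), IsNestSet E N →
      (((0 : Fin (n + 5)) ∈ N ∧ (1 : Fin (n + 5)) ∉ N) ∨ ((1 : Fin (n + 5)) ∈ N ∧ (0 : Fin (n + 5)) ∉ N)) →
      ∀ i : Fin (n + 5), 2 ≤ (i : ℕ) → i ∈ N) ∧
    (∀ L : List (Finset (Fin (n + 5))), IsElimOrder Finset.univ E L →
      ∃ N ∈ L, n + 4 ≤ N.card) ∧
    (∃ L : List (Finset (Fin (n + 5))), IsElimOrder Finset.univ E L ∧
      ∀ N ∈ L, N.card ≤ n + 4) := by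
  intro E
  have hE : IsHubPair E 0 1 := fun v hv0 hv1 => by
    have hv : v ∈ Finset.univ.filter (fun i : Fin (n + 5) => 2 ≤ (i : ℕ)) := by
      simpa [Fin.two_le_val_iff] using ⟨hv0, hv1⟩
    exact ⟨Finset.mem_union_left _ (Finset.mem_image_of_mem _ hv),
      Finset.mem_union_right _ (Finset.mem_image_of_mem _ hv)⟩
  have h01 : (0 : Fin (n + 5)) ≠ 1 := by simp
  have hV : 4 ≤ Fintype.card (Fin (n + 5)) := by simp
  refine ⟨fun N hN hne => hE.mem_or_mem h01 hN hne, ?_, ?_, ?_⟩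
  · rintro N hN (⟨h0, h1⟩ | ⟨h1, h0⟩) i hi <;> obtain ⟨hi0, hi1⟩ := Fin.two_le_val_iff.1 hi
    · exact hE.mem_of_mem_of_notMem hV hN h0 h1 hi0 hi1
    · exact hE.symm.mem_of_mem_of_notMem hV hN h1 h0 hi1 hi0
  · intro L hL
    obtain ⟨N, hNL, hne, hN⟩ := hL.exists_nonempty_isNestSet Finset.univ_nonempty
    have := hE.card_le_card_add_one h01 hV hN hne
    exact ⟨N, hNL, by simpa using this⟩
  · refine ⟨_, isElimOrder_compl_singleton E 1, ?_⟩
    simp [Finset.card_compl]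
end

section
/- Let C = v₁, e₁, v₂, e₂, …, v_ℓ, e_ℓ, v₁ be a β-cycle of length ℓ ≥ 3 in a hypergraph G. Define U₁ := (e_ℓ ∩ e₁) \ ⋃_{j=2}^{ℓ−1} e_j and, for i = 2,…,ℓ, U_i := (e_{i−1} ∩ e_i) \ ⋃_{j ∈ [ℓ]\{i−1,i}} e_j. Then for every nest-set s of G, the set s ∩ (⋃_{j=1}^ℓ U_j) is either empty or s contains at least ℓ − 1 of the sets U_j, j ∈ [ℓ]. -/
open Finset

/-- A β-cycle `v₀, e₀, v₁, e₁, …, v_{ℓ-1}, e_{ℓ-1}, v₀` of length `ℓ = l + 3 ≥ 3` in the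
hypergraph with edge set `E`: distinct nodes, distinct edges, and `v i` belongs to
`e (i-1)`, `e i` and to no other `e j` (indices cyclic in `Fin (l + 3)`). -/
def IsBetaCycle {V : Type*} (E : Finset (Finset V)) (l : ℕ)
    (v : Fin (l + 3) → V) (e : Fin (l + 3) → Finset V) : Prop :=
  Function.Injective v ∧ Function.Injective e ∧ (∀ i, e i ∈ E) ∧
  ∀ i j, v i ∈ e j ↔ (j = i ∨ j + 1 = i)

/-!
Two edges of the cycle that both meet the nest-set `s` have comparable differences with `s`,
so no two nodes outside `s`, each lying in only two consecutive edges of the cycle, can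
separate them. Applied to `v (p + 1)` and `v q`, where `p` is the last and `q ≠ p` the first
edge of a run of edges meeting `s`, this shows that once two consecutive edges (those through a
point of `s ∩ U i`) meet `s`, every edge of the cycle does. Applied to points of `U j \ s` and
`U k \ s`, it then shows `j = k`: at most one `U j` is not contained in `s`.
-/

theorem Fin.exists_and_not_add_one {n : ℕ} {P : Fin (n + 1) → Prop} {a b : Fin (n + 1)}
    (ha : P a) (hb : ¬ P b) : ∃ p, P p ∧ ¬ P (p + 1) := by
  by_contra! h
  have hall : ∀ c, P (a + c) :=
    Fin.induction (by simpa using ha) fun c hc => by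
      simpa [← Fin.coeSucc_eq_succ, ← add_assoc] using h _ hc
  exact hb (by simpa using hall (b - a))

theorem Fin.sub_one_ne_self {n : ℕ} (j : Fin (n + 2)) : j - 1 ≠ j := by
  simp [sub_eq_self]

theorem Fin.add_one_ne_sub_one {n : ℕ} (j : Fin (n + 3)) : j + 1 ≠ j - 1 := by
  intro h
  have h2 : (2 : Fin (n + 3)) = 0 := by
    open Fin.CommRing in linear_combination h
  simp [Fin.ext_iff, Nat.mod_eq_of_lt] at h2

theorem IsNestSet.mem_of_mem_sdiff {V : Type*} [DecidableEq V] {E : Finset (Finset V)}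
    {s e₁ e₂ : Finset V} {a b : V} (hs : IsNestSet E s) (he₁ : e₁ ∈ E) (he₂ : e₂ ∈ E)
    (h₁ : (e₁ ∩ s).Nonempty) (h₂ : (e₂ ∩ s).Nonempty)
    (ha : a ∈ e₁ \ s) (ha₂ : a ∉ e₂) (hb : b ∈ e₂ \ s) : b ∈ e₁ := by
  rcases hs e₁ he₁ e₂ he₂ h₁ h₂ with h | h
  · exact absurd (mem_sdiff.1 (h ha)).1 ha₂
  · exact (mem_sdiff.1 (h hb)).1

section BetaCycle

variable {V : Type*} [DecidableEq V] {E : Finset (Finset V)} {l : ℕ}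
  {v : Fin (l + 3) → V} {e : Fin (l + 3) → Finset V} {s : Finset V}

def junction (e : Fin (l + 3) → Finset V) (i : Fin (l + 3)) : Finset V :=
  (e (i - 1) ∩ e i) \ ((univ.erase (i - 1)).erase i).sup e

theorem mem_iff_of_mem_junction {y : V} {i : Fin (l + 3)} (hy : y ∈ junction e i)
    (k : Fin (l + 3)) : y ∈ e k ↔ k = i - 1 ∨ k = i := by
  simp only [junction, mem_sdiff, mem_inter, mem_sup, mem_erase, mem_univ, and_true,
    not_exists, not_and] at hy
  constructor
  · intro hk
    by_contra! h
    exact hy.2 k ⟨h.2, h.1⟩ hk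
  · rintro (rfl | rfl)
    exacts [hy.1.1, hy.1.2]

/-- If the edges meeting `s` leave the cycle after `e p` and enter it at `e q`, then `p = q`:
otherwise `v (p + 1)` and `v q` separate `e p \ s` from `e q \ s`. -/
theorem IsBetaCycle.eq_of_exit_of_entry (hC : IsBetaCycle E l v e) (hs : IsNestSet E s)
    {p q : Fin (l + 3)} (hp : (e p ∩ s).Nonempty) (hp₁ : ¬ (e (p + 1) ∩ s).Nonempty)
    (hq : (e q ∩ s).Nonempty) (hq₁ : ¬ (e (q - 1) ∩ s).Nonempty) : p = q := by
  obtain ⟨-, -, heE, hmem⟩ := hC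
  by_contra hpq
  have hvp : v (p + 1) ∉ s := fun h =>
    hp₁ ⟨_, mem_inter.2 ⟨(hmem _ _).2 (Or.inl rfl), h⟩⟩
  have hvq : v q ∉ s := fun h =>
    hq₁ ⟨_, mem_inter.2 ⟨(hmem _ _).2 (Or.inr (sub_add_cancel q 1)), h⟩⟩
  have hvq_mem : v q ∈ e p :=
    hs.mem_of_mem_sdiff (heE p) (heE q) hp hq
      (mem_sdiff.2 ⟨(hmem _ _).2 (Or.inr rfl), hvp⟩)
      (fun h => by
        rcases (hmem _ _).1 h with h | h
        exacts [hp₁ (h ▸ hq), hpq (add_right_cancel h).symm])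
      (mem_sdiff.2 ⟨(hmem _ _).2 (Or.inl rfl), hvq⟩)
  rcases (hmem _ _).1 hvq_mem with h | h
  exacts [hpq h, hp₁ (h ▸ hq)]

theorem IsBetaCycle.inter_nonempty (hC : IsBetaCycle E l v e) (hs : IsNestSet E s)
    {i : Fin (l + 3)} (hi₁ : (e (i - 1) ∩ s).Nonempty) (hi : (e i ∩ s).Nonempty)
    (k : Fin (l + 3)) : (e k ∩ s).Nonempty := by
  by_contra hk
  obtain ⟨p, hp, hp₁⟩ := Fin.exists_and_not_add_one (P := fun j => (e j ∩ s).Nonempty) hi hk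
  obtain ⟨c, hc, hcp⟩ : ∃ c, (e c ∩ s).Nonempty ∧ c ≠ p :=
    if h : i = p then ⟨i - 1, hi₁, h ▸ Fin.sub_one_ne_self i⟩ else ⟨i, hi, h⟩
  -- an edge `e (r + 1)` other than `e p` that meets `s` while `e r` does not
  obtain ⟨r, hr, hr₁⟩ := Fin.exists_and_not_add_one
    (P := fun j => ¬ ((e j ∩ s).Nonempty ∧ j ≠ p)) (a := p) (b := c) (by simp) (by simp [hc, hcp])
  rw [not_not] at hr₁
  have hr_out : ¬ (e (r + 1 - 1) ∩ s).Nonempty := by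
    rw [add_sub_cancel_right]
    intro h
    refine hr ⟨h, fun hrp => hp₁ ?_⟩
    exact hrp ▸ hr₁.1
  exact hr₁.2 (hC.eq_of_exit_of_entry hs hp hp₁ hr₁.1 hr_out).symm

theorem IsBetaCycle.eq_of_not_junction_subset (hC : IsBetaCycle E l v e) (hs : IsNestSet E s)
    (hmeet : ∀ k, (e k ∩ s).Nonempty) {j k : Fin (l + 3)}
    (hj : ¬ junction e j ⊆ s) (hk : ¬ junction e k ⊆ s) : j = k := by
  obtain ⟨y, hyU, hys⟩ := not_subset.1 hj
  obtain ⟨z, hzU, hzs⟩ := not_subset.1 hk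
  have hy := mem_iff_of_mem_junction hyU
  have hz := mem_iff_of_mem_junction hzU
  have separate (p q : Fin (l + 3)) (hyp : y ∈ e p) (hyq : y ∉ e q) (hzq : z ∈ e q)
      (hzp : z ∉ e p) : False :=
    hzp (hs.mem_of_mem_sdiff (hC.2.2.1 p) (hC.2.2.1 q) (hmeet p) (hmeet q)
      (mem_sdiff.2 ⟨hyp, hys⟩) hyq (mem_sdiff.2 ⟨hzq, hzs⟩))
  by_contra hjk
  by_cases hkj : k = j + 1
  · subst hkj
    exact separate (j - 1) (j + 1) (by simp [hy]) (by simp [hy, Fin.add_one_ne_sub_one])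
      (by simp [hz]) (by simp [hz, (Fin.add_one_ne_sub_one j).symm])
  by_cases hjk' : j = k + 1
  · subst hjk'
    exact separate (k + 1) (k - 1) (by simp [hy])
      (by simp [hy, (Fin.add_one_ne_sub_one k).symm])
      (by simp [hz]) (by simp [hz, Fin.add_one_ne_sub_one])
  refine separate j k (by simp [hy]) ?_ (by simp [hz]) ?_
  · simp only [hy, not_or]
    exact ⟨fun h => hjk' (eq_sub_iff_add_eq.1 h).symm, Ne.symm hjk⟩
  · simp only [hz, not_or]
    exact ⟨fun h => hkj (eq_sub_iff_add_eq.1 h).symm, hjk⟩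

end BetaCycle

/-- Let `C` be a β-cycle of length `ℓ = l + 3 ≥ 3` in a hypergraph, and define
`U i := (e (i-1) ∩ e i) \ ⋃_{j ∉ {i-1, i}} e j`. Then for every nest-set `s`, the set
`s ∩ ⋃ j, U j` is either empty, or `s` contains at least `ℓ - 1` of the sets `U j`. -/
theorem stmt_5 {V : Type*} [DecidableEq V] (E : Finset (Finset V)) (l : ℕ)
    (v : Fin (l + 3) → V) (e : Fin (l + 3) → Finset V)
    (hC : IsBetaCycle E l v e) :
    let U : Fin (l + 3) → Finset V :=
      fun i => (e (i - 1) ∩ e i) \ ((Finset.univ.erase (i - 1)).erase i).sup e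
    ∀ s : Finset V, IsNestSet E s →
      s ∩ Finset.univ.sup U = ∅ ∨
      l + 2 ≤ (Finset.univ.filter (fun j : Fin (l + 3) => U j ⊆ s)).card := by
  intro U s hs
  refine or_iff_not_imp_left.2 fun hne => ?_
  obtain ⟨x, hx⟩ := nonempty_iff_ne_empty.2 hne
  simp only [mem_inter, mem_sup, mem_univ, true_and] at hx
  obtain ⟨hxs, i, hxi⟩ := hx
  have hxe := mem_iff_of_mem_junction hxi
  have hmeet := hC.inter_nonempty hs ⟨x, mem_inter.2 ⟨(hxe _).2 (Or.inl rfl), hxs⟩⟩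
    ⟨x, mem_inter.2 ⟨(hxe _).2 (Or.inr rfl), hxs⟩⟩
  have hbad : (univ.filter fun j => ¬ U j ⊆ s).card ≤ 1 :=
    card_le_one.2 fun j hj k hk =>
      hC.eq_of_not_junction_subset hs hmeet (mem_filter.1 hj).2 (mem_filter.1 hk).2
  have htotal := card_filter_add_card_filter_not (s := univ) fun j => U j ⊆ s
  rw [card_univ, Fintype.card_fin] at htotal
  omega
end

section
/- Let G be a hypergraph containing a β-cycle C = v₁, e₁, …, v_ℓ, e_ℓ, v₁ of length ℓ ≥ 3, and define the sets U_j, j ∈ [ℓ], as follows: U₁ := (e_ℓ ∩ e₁) \ ⋃_{j=2}^{ℓ−1} e_j and U_i := (e_{i−1} ∩ e_i) \ ⋃_{j ∈ [ℓ]\{i−1,i}} e_j for i ≥ 2. Then the nest-set width of G satisfies nsw(G) ≥ min_{k ∈ [ℓ]} Σ_{j ∈ [ℓ]\{k}} |U_j|. -/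
open Finset

/-! Let `N` be the first set of the elimination order that meets some `U j`, and `X` the union of
the sets eliminated before it. Every `e j \ X` still contains `v j` and `v (j + 1)`, so it is an
edge of the reduced hypergraph in which `N` is a nest-set, and the `U j` avoid `X`. If two of the
`U j` were not contained in `N`, the cycle would provide two edges meeting `N`, each containing a
node outside `N` that the other one misses, which a nest-set forbids. So `N` contains all the
`U j` but one, and these are pairwise disjoint. -/

theorem mem_foldr_union {V : Type*} [DecidableEq V] {L : List (Finset V)} {x : V} :
    x ∈ L.foldr (· ∪ ·) ∅ ↔ ∃ s ∈ L, x ∈ s := by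
  induction L with
  | nil => simp
  | cons a t ih => simp [ih]

theorem sdiff_mem_foldl_hreduce {V : Type*} [DecidableEq V] (M : List (Finset V))
    {E : Finset (Finset V)} {s : Finset V} (hs : s ∈ E)
    (hcard : 2 ≤ (s \ M.foldr (· ∪ ·) ∅).card) :
    s \ M.foldr (· ∪ ·) ∅ ∈ M.foldl hreduce E := by
  induction M generalizing E s with
  | nil => simpa using hs
  | cons a M ih =>
    rw [List.foldr_cons, sdiff_union_distrib, ← Finset.sdiff_sdiff_left'] at hcard ⊢
    refine ih (mem_filter.mpr ⟨mem_image_of_mem _ hs, ?_⟩) hcard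
    exact hcard.trans (card_le_card sdiff_subset)

theorem IsElimOrder.isNestSet_of_eq_append {V : Type*} [DecidableEq V] {Vs : Finset V}
    {E : Finset (Finset V)} {L₁ L₂ : List (Finset V)} {N : Finset V}
    (hL : IsElimOrder Vs E (L₁ ++ N :: L₂)) : IsNestSet (L₁.foldl hreduce E) N := by
  simpa using hL.2.2.2 ⟨L₁.length, by simp⟩

theorem List.exists_eq_append_cons_of_exists {α : Type*} {p : α → Prop} [DecidablePred p]
    {L : List α} (h : ∃ x ∈ L, p x) :
    ∃ L₁ x L₂, L = L₁ ++ x :: L₂ ∧ p x ∧ ∀ y ∈ L₁, ¬p y := by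
  obtain ⟨x, hx⟩ : ∃ x, L.find? (fun y => decide (p y)) = some x :=
    Option.isSome_iff_exists.mp (List.find?_isSome.mpr (by simpa using h))
  obtain ⟨hpx, L₁, L₂, rfl, hL₁⟩ := List.find?_eq_some_iff_append.mp hx
  exact ⟨L₁, x, L₂, rfl, by simpa using hpx, fun y hy => by simpa using hL₁ y hy⟩

section CyclicRuns

open Fin.CommRing

variable {n : ℕ} [NeZero n]

theorem Fin.exists_add_one_not_of_not {p : Fin n → Prop} {x y : Fin n} (hx : p x) (hy : ¬p y) :
    ∃ z, p z ∧ ¬p (z + 1) := by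
  by_contra! hclosed
  have hrun : ∀ k : ℕ, p (x + k) := by
    intro k
    induction k with
    | zero => simpa using hx
    | succ k ih => simpa [add_assoc] using hclosed _ ih
  exact hy (by simpa using hrun (y - x).val)

theorem Fin.exists_sub_one_not_of_not {p : Fin n → Prop} {x y : Fin n} (hx : p x) (hy : ¬p y) :
    ∃ z, p z ∧ ¬p (z - 1) := by
  obtain ⟨z, hz, hz1⟩ := Fin.exists_add_one_not_of_not (p := fun z => ¬p z) hy (not_not.mpr hx)
  exact ⟨z + 1, not_not.mp hz1, by simpa using hz⟩

end CyclicRuns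

section CycleCrossing

open Fin.CommRing

variable {l : ℕ}

theorem Fin.two_ne_zero_add_three : (2 : Fin (l + 3)) ≠ 0 := by
  simp [Fin.ext_iff, Nat.mod_eq_of_lt]

theorem Fin.exists_sub_one_or_eq_and_ne (a b : Fin (l + 3)) (hab : a ≠ b) :
    ∃ P, (P = a - 1 ∨ P = a) ∧ P ≠ b - 1 ∧ P ≠ b := by
  by_cases ha : a = b - 1
  · refine ⟨a - 1, Or.inl rfl, fun h => hab (by linear_combination h), fun h => ?_⟩
    exact Fin.two_ne_zero_add_three (by linear_combination ha - h)
  · exact ⟨a, Or.inr rfl, ha, hab⟩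

/- Position `j` of the cycle lies between the edges `j - 1` and `j`. If every edge is `met`, two
`bad` positions cross directly. Otherwise there is a run of `met` edges starting at some `p`, and
(around `c`) a run of at least two `met` edges ending at some `q`; then `p ≠ q`, and the bad
positions `p` and `q + 1` cross at the edges `p` and `q`. -/
theorem Fin.exists_forall_ne_not_of_crossing (met bad : Fin (l + 3) → Prop)
    (hgood : ∀ a, ¬bad a → met (a - 1) ∧ met a)
    (hcross : ∀ P Q a b, met P → met Q → bad a → bad b → (P = a - 1 ∨ P = a) →
      (Q = b - 1 ∨ Q = b) → Q ≠ a - 1 → Q ≠ a → P ≠ b - 1 → P ≠ b → False)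
    {c : Fin (l + 3)} (hc : met (c - 1) ∧ met c) :
    ∃ k, ∀ j, j ≠ k → ¬bad j := by
  by_cases hall : ∀ i, met i
  · by_contra! hbad
    obtain ⟨a, -, ha⟩ := hbad c
    obtain ⟨b, hba, hb⟩ := hbad a
    obtain ⟨P, hPa, hPb, hPb'⟩ := Fin.exists_sub_one_or_eq_and_ne a b hba.symm
    obtain ⟨Q, hQb, hQa, hQa'⟩ := Fin.exists_sub_one_or_eq_and_ne b a hba
    exact (hcross P Q a b (hall P) (hall Q) ha hb hPa hQb hQa hQa' hPb hPb').elim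
  · push Not at hall
    obtain ⟨u, hu⟩ := hall
    obtain ⟨p, hp, hp1⟩ := Fin.exists_sub_one_not_of_not hc.2 hu
    obtain ⟨q, ⟨hq1, hq⟩, hq2⟩ :=
      Fin.exists_add_one_not_of_not (p := fun x => met (x - 1) ∧ met x) hc (fun h => hu h.2)
    replace hq2 : ¬met (q + 1) := fun h => hq2 ⟨by simpa using hq, h⟩
    have hpbad : bad p := by_contra fun h => hp1 (hgood p h).1
    have hqbad : bad (q + 1) := by_contra fun h => hq2 (hgood _ h).2
    refine (hcross p q p (q + 1) hp hq hpbad hqbad (Or.inr rfl) (Or.inl (by ring))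
      ?_ ?_ ?_ ?_).elim
    · rintro rfl; exact hp1 hq
    · rintro rfl; exact hp1 hq1
    · rw [add_sub_cancel_right]; rintro rfl; exact hp1 hq1
    · rintro rfl; exact hq2 hp

end CycleCrossing

theorem IsNestSet.false_of_crossing {V : Type*} [DecidableEq V] {E : Finset (Finset V)}
    {N e₁ e₂ : Finset V} (hN : IsNestSet E N) (he₁ : e₁ ∈ E) (he₂ : e₂ ∈ E)
    (hN₁ : (e₁ ∩ N).Nonempty) (hN₂ : (e₂ ∩ N).Nonempty) {x y : V}
    (hx : x ∈ e₁ \ N) (hx₂ : x ∉ e₂) (hy : y ∈ e₂ \ N) (hy₁ : y ∉ e₁) : False := by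
  rcases hN e₁ he₁ e₂ he₂ hN₁ hN₂ with h | h
  · exact hx₂ (mem_sdiff.mp (h hx)).1
  · exact hy₁ (mem_sdiff.mp (h hy)).1

section NestSetOnCycle

open Fin.CommRing

variable {V : Type*} [DecidableEq V] {l : ℕ}

theorem IsNestSet.exists_forall_ne_subset_of_cycle {E : Finset (Finset V)} {N : Finset V}
    (hN : IsNestSet E N) {f U : Fin (l + 3) → Finset V} (hf : ∀ i, f i ∈ E)
    (hUf : ∀ j, U j ⊆ f (j - 1) ∩ f j) (hUf' : ∀ j k, ∀ x ∈ U j, x ∈ f k → k = j - 1 ∨ k = j)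
    (hU : ∀ j, (U j).Nonempty) {c : Fin (l + 3)} (hc : (U c ∩ N).Nonempty) :
    ∃ k, ∀ j, j ≠ k → U j ⊆ N := by
  have mem_of_incident : ∀ {a P x}, x ∈ U a → (P = a - 1 ∨ P = a) → x ∈ f P := by
    rintro a P x hx (rfl | rfl)
    exacts [(mem_inter.mp (hUf _ hx)).1, (mem_inter.mp (hUf _ hx)).2]
  have met_of_meets : ∀ a, (U a ∩ N).Nonempty → (f (a - 1) ∩ N).Nonempty ∧ (f a ∩ N).Nonempty :=
    fun a h => ⟨h.mono (inter_subset_inter_right ((hUf a).trans inter_subset_left)),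
      h.mono (inter_subset_inter_right ((hUf a).trans inter_subset_right))⟩
  have hgood : ∀ a, ¬¬U a ⊆ N → (f (a - 1) ∩ N).Nonempty ∧ (f a ∩ N).Nonempty := fun a ha =>
    met_of_meets a (by rw [inter_eq_left.mpr (not_not.mp ha)]; exact hU a)
  have hcross : ∀ P Q a b, (f P ∩ N).Nonempty → (f Q ∩ N).Nonempty → ¬U a ⊆ N → ¬U b ⊆ N →
      (P = a - 1 ∨ P = a) → (Q = b - 1 ∨ Q = b) → Q ≠ a - 1 → Q ≠ a → P ≠ b - 1 → P ≠ b →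
      False := by
    intro P Q a b hP hQ ha hb hPa hQb hQa hQa' hPb hPb'
    obtain ⟨x, hxa, hxN⟩ := not_subset.mp ha
    obtain ⟨y, hyb, hyN⟩ := not_subset.mp hb
    refine hN.false_of_crossing (hf P) (hf Q) hP hQ (mem_sdiff.mpr ⟨mem_of_incident hxa hPa, hxN⟩)
      ?_ (mem_sdiff.mpr ⟨mem_of_incident hyb hQb, hyN⟩) ?_
    · exact fun hx => (hUf' a Q x hxa hx).elim hQa hQa'
    · exact fun hy => (hUf' b P y hyb hy).elim hPb hPb'
  obtain ⟨k, hk⟩ := Fin.exists_forall_ne_not_of_crossing _ _ hgood hcross (met_of_meets c hc)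
  exact ⟨k, fun j hj => not_not.mp (hk j hj)⟩

end NestSetOnCycle

section CyclePrivatePart

variable {V : Type*} [DecidableEq V] {l : ℕ}

/-- The set `U i` of the statement. -/
def cyclePrivatePart (e : Fin (l + 3) → Finset V) (i : Fin (l + 3)) : Finset V :=
  (e (i - 1) ∩ e i) \ ((univ.erase (i - 1)).erase i).sup e

theorem cyclePrivatePart_subset (e : Fin (l + 3) → Finset V) (i : Fin (l + 3)) :
    cyclePrivatePart e i ⊆ e (i - 1) ∩ e i :=
  sdiff_subset

theorem eq_sub_one_or_eq_of_mem_cyclePrivatePart {e : Fin (l + 3) → Finset V} {i k : Fin (l + 3)}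
    {x : V} (hx : x ∈ cyclePrivatePart e i) (hk : x ∈ e k) : k = i - 1 ∨ k = i := by
  by_contra! hne
  exact (mem_sdiff.mp hx).2 (mem_sup.mpr ⟨k, by simp [hne.1, hne.2], hk⟩)

open Fin.CommRing in
theorem pairwiseDisjoint_cyclePrivatePart (e : Fin (l + 3) → Finset V) :
    (Set.univ : Set (Fin (l + 3))).PairwiseDisjoint (cyclePrivatePart e) := by
  intro i _ j _ hij
  refine disjoint_left.mpr fun x hxi hxj => ?_
  have hxj' := mem_inter.mp (cyclePrivatePart_subset e j hxj)
  rcases eq_sub_one_or_eq_of_mem_cyclePrivatePart hxi hxj'.2 with hj | hj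
  · rcases eq_sub_one_or_eq_of_mem_cyclePrivatePart hxi hxj'.1 with h | h
    · exact hij (by linear_combination -h)
    · exact Fin.two_ne_zero_add_three (by linear_combination hj - h)
  · exact hij hj.symm

theorem IsBetaCycle.mem_cyclePrivatePart {E : Finset (Finset V)} {v : Fin (l + 3) → V}
    {e : Fin (l + 3) → Finset V} (hC : IsBetaCycle E l v e) (i : Fin (l + 3)) :
    v i ∈ cyclePrivatePart e i := by
  have hmem := hC.2.2.2 i
  refine mem_sdiff.mpr ⟨mem_inter.mpr ⟨(hmem _).mpr (Or.inr (sub_add_cancel i 1)),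
    (hmem i).mpr (Or.inl rfl)⟩, fun hsup => ?_⟩
  obtain ⟨k, hk, hvk⟩ := mem_sup.mp hsup
  rcases (hmem k).mp hvk with rfl | hk1
  · simp at hk
  · simp [← hk1] at hk

end CyclePrivatePart

theorem IsBetaCycle.exists_mem_sum_card_cyclePrivatePart_le {V : Type*} [DecidableEq V]
    {Vs : Finset V} {E : Finset (Finset V)} (hE : ∀ e ∈ E, e ⊆ Vs) {l : ℕ}
    {v : Fin (l + 3) → V} {e : Fin (l + 3) → Finset V} (hC : IsBetaCycle E l v e)
    {L : List (Finset V)} (hL : IsElimOrder Vs E L) :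
    ∃ N ∈ L, ∃ k, ∑ j ∈ univ.erase k, (cyclePrivatePart e j).card ≤ N.card := by
  set S := univ.biUnion (cyclePrivatePart e)
  have hvU := hC.mem_cyclePrivatePart
  obtain ⟨hv, -, heE, hve⟩ := hC
  have hvS : ∀ i, v i ∈ S := fun i => mem_biUnion.mpr ⟨i, mem_univ i, hvU i⟩
  obtain ⟨M, hM, hvM⟩ : ∃ M ∈ L, v 0 ∈ M := by
    rw [← mem_foldr_union, hL.2.2.1]
    exact hE _ (heE 0) ((hve 0 0).mpr (Or.inl rfl))
  obtain ⟨L₁, N, L₂, rfl, hNS, hL₁⟩ := List.exists_eq_append_cons_of_exists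
    (p := fun M => (M ∩ S).Nonempty) ⟨M, hM, v 0, mem_inter.mpr ⟨hvM, hvS 0⟩⟩
  set X := L₁.foldr (· ∪ ·) ∅
  have hX : ∀ i, ∀ x ∈ cyclePrivatePart e i, x ∉ X := fun i x hx hxX => by
    obtain ⟨M, hM, hxM⟩ := mem_foldr_union.mp hxX
    exact hL₁ M hM ⟨x, mem_inter.mpr ⟨hxM, mem_biUnion.mpr ⟨i, mem_univ i, hx⟩⟩⟩
  have hvX : ∀ i, v i ∉ X := fun i => hX i _ (hvU i)
  have hreduced : ∀ i, e i \ X ∈ L₁.foldl hreduce E := fun i => by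
    refine sdiff_mem_foldl_hreduce L₁ (heE i) ?_
    calc 2 = ({v i, v (i + 1)} : Finset V).card := (card_pair (hv.ne (by simp))).symm
      _ ≤ (e i \ X).card := card_le_card <| insert_subset_iff.mpr
          ⟨mem_sdiff.mpr ⟨(hve i i).mpr (Or.inl rfl), hvX i⟩,
            singleton_subset_iff.mpr (mem_sdiff.mpr ⟨(hve _ i).mpr (Or.inr rfl), hvX _⟩)⟩
  obtain ⟨x, hx⟩ := hNS
  obtain ⟨hxN, hxS⟩ := mem_inter.mp hx
  obtain ⟨c, -, hxc⟩ := mem_biUnion.mp hxS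
  obtain ⟨k, hk⟩ := hL.isNestSet_of_eq_append.exists_forall_ne_subset_of_cycle hreduced
    (fun j y hy => by
      have hy' := mem_inter.mp (cyclePrivatePart_subset e j hy)
      exact mem_inter.mpr ⟨mem_sdiff.mpr ⟨hy'.1, hX j y hy⟩, mem_sdiff.mpr ⟨hy'.2, hX j y hy⟩⟩)
    (fun j k y hy hyk => eq_sub_one_or_eq_of_mem_cyclePrivatePart hy (mem_sdiff.mp hyk).1)
    (fun j => ⟨v j, hvU j⟩) ⟨x, mem_inter.mpr ⟨hxc, hxN⟩⟩
  refine ⟨N, by simp, k, ?_⟩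
  rw [← card_biUnion ((pairwiseDisjoint_cyclePrivatePart e).subset (Set.subset_univ _))]
  exact card_le_card (biUnion_subset.mpr fun j hj => hk j (ne_of_mem_erase hj))

/-- If a hypergraph `G = (Vs, E)` contains a β-cycle of length `ℓ = l + 3`, with the sets
`U j` as in the paper, then `nsw(G) ≥ min_k ∑_{j ≠ k} |U j|`; i.e. every nest-set
elimination order has an element of cardinality at least this bound. -/
theorem stmt_6 {V : Type*} [DecidableEq V] (Vs : Finset V) (E : Finset (Finset V))
    (hE : ∀ e ∈ E, e ⊆ Vs) (l : ℕ)
    (v : Fin (l + 3) → V) (e : Fin (l + 3) → Finset V)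
    (hC : IsBetaCycle E l v e) :
    let U : Fin (l + 3) → Finset V :=
      fun i => (e (i - 1) ∩ e i) \ ((Finset.univ.erase (i - 1)).erase i).sup e
    ∀ L : List (Finset V), IsElimOrder Vs E L →
      ∃ N ∈ L,
        Finset.univ.inf' Finset.univ_nonempty
          (fun k : Fin (l + 3) => ∑ j ∈ Finset.univ.erase k, (U j).card) ≤ N.card := by
  intro U L hL
  obtain ⟨N, hN, k, hk⟩ := hC.exists_mem_sum_card_cyclePrivatePart_le hE hL
  exact ⟨N, hN, (inf'_le _ (mem_univ k)).trans hk⟩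
end

section
/- If a hypergraph G contains a β-cycle of length ℓ ≥ 3, then nsw(G) ≥ ℓ − 1. -/
open Finset

/-!
Let `N` be a nest-set containing a vertex of a β-cycle `v₀, e₀, …, v_{ℓ-1}, e_{ℓ-1}`. If it does
not contain all of them, rotate the cycle so that `v₀ ∈ N` and `v_{ℓ-1} ∉ N`. The edge `e_{ℓ-1}`
meets `N` and has `v_{ℓ-1}` outside `N`, so the nest order forces `e_j \ N ⊆ e_{ℓ-1} \ N` for
every `j < ℓ - 2` with `e_j` meeting `N`. Walking along the cycle, `v_{j+1} ∈ e_j` could then only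
lie outside `N` by lying on `e_{ℓ-1}`, which it does not. Hence `v₀, …, v_{ℓ-2} ∈ N` and
`|N| ≥ ℓ - 1`. In an elimination order the sets before the first one meeting the cycle avoid its
vertices, and deleting them keeps the β-cycle intact.
-/

open Fin.NatCast in
theorem Fin.forall_of_forall_imp_add_one {n : ℕ} [NeZero n] {P : Fin n → Prop} {a : Fin n}
    (ha : P a) (hstep : ∀ i, P i → P (i + 1)) (i : Fin n) : P i := by
  have hreach : ∀ m : ℕ, P (a + (m : Fin n)) := by
    intro m
    induction m with
    | zero => simpa using ha
    | succ m ih => simpa [add_assoc] using hstep _ ih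
  simpa using hreach (i - a).val

theorem List.mem_foldr_union_iff {α : Type*} [DecidableEq α] {L : List (Finset α)} {x : α} :
    x ∈ L.foldr (· ∪ ·) ∅ ↔ ∃ N ∈ L, x ∈ N := by
  induction L with
  | nil => simp
  | cons N L ih => simp [ih]

namespace IsBetaCycle

variable {V : Type*} {E : Finset (Finset V)} {l : ℕ} {v : Fin (l + 3) → V}
  {e : Fin (l + 3) → Finset V}

theorem edge_mem (hC : IsBetaCycle E l v e) (i : Fin (l + 3)) : e i ∈ E :=
  hC.2.2.1 i

theorem mem_edge_iff (hC : IsBetaCycle E l v e) {i j : Fin (l + 3)} :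
    v i ∈ e j ↔ j = i ∨ j + 1 = i :=
  hC.2.2.2 i j

theorem mem_edge_self (hC : IsBetaCycle E l v e) (i : Fin (l + 3)) : v i ∈ e i :=
  hC.mem_edge_iff.2 (Or.inl rfl)

theorem mem_edge_add_one (hC : IsBetaCycle E l v e) (i : Fin (l + 3)) : v (i + 1) ∈ e i :=
  hC.mem_edge_iff.2 (Or.inr rfl)

theorem rotate (hC : IsBetaCycle E l v e) (k : Fin (l + 3)) :
    IsBetaCycle E l (fun j => v (j + k)) (fun j => e (j + k)) := by
  obtain ⟨hv, he, hE, hmem⟩ := hC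
  refine ⟨hv.comp (add_left_injective k), he.comp (add_left_injective k), fun i => hE _,
    fun i j => ?_⟩
  simp only [hmem, add_right_comm j k 1, add_left_inj]

variable [DecidableEq V] {N : Finset V}

/-- The edge `e (last)` joins `v (last) ∉ N` to `v 0 ∈ N`; comparing it in the nest order with an
edge `e j` that leaves `N` at `v (j + 1)` pins `j` down to the last two indices. -/
theorem eq_last_or_add_one_eq_last_of_isNestSet (hC : IsBetaCycle E l v e) (hN : IsNestSet E N)
    (h0 : v 0 ∈ N) (hlast : v (Fin.last _) ∉ N) {j : Fin (l + 3)} (hj : v j ∈ N)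
    (hj1 : v (j + 1) ∉ N) : j = Fin.last _ ∨ j + 1 = Fin.last _ := by
  have h0last : v 0 ∈ e (Fin.last _) := by simpa using hC.mem_edge_add_one (Fin.last _)
  rcases hN _ (hC.edge_mem j) _ (hC.edge_mem _) ⟨v j, mem_inter.2 ⟨hC.mem_edge_self j, hj⟩⟩
      ⟨v 0, mem_inter.2 ⟨h0last, h0⟩⟩ with hsub | hsub
  · have := (mem_sdiff.1 (hsub (mem_sdiff.2 ⟨hC.mem_edge_add_one j, hj1⟩))).1
    rcases hC.mem_edge_iff.1 this with h | h
    · exact Or.inr h.symm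
    · exact Or.inl (add_right_cancel h).symm
  · have := (mem_sdiff.1 (hsub (mem_sdiff.2 ⟨hC.mem_edge_self _, hlast⟩))).1
    exact hC.mem_edge_iff.1 this

theorem add_two_le_card_of_isNestSet_of_mem_zero (hC : IsBetaCycle E l v e) (hN : IsNestSet E N)
    (h0 : v 0 ∈ N) (hlast : v (Fin.last _) ∉ N) : l + 2 ≤ N.card := by
  have hmem : ∀ k : Fin (l + 2), v k.castSucc ∈ N := by
    refine Fin.induction (by simpa using h0) fun k hk => ?_
    by_contra hk1
    rw [← Fin.succ_castSucc, ← Fin.coeSucc_eq_succ] at hk1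
    rcases hC.eq_last_or_add_one_eq_last_of_isNestSet hN h0 hlast hk hk1 with h | h
    · exact Fin.castSucc_ne_last _ h
    · rw [Fin.coeSucc_eq_succ, Fin.succ_castSucc] at h
      exact Fin.castSucc_ne_last _ h
  calc l + 2 = (univ.image (v ∘ Fin.castSucc)).card := by
        rw [card_image_of_injective _ (hC.1.comp (Fin.castSucc_injective _)), card_univ,
          Fintype.card_fin]
    _ ≤ N.card := card_le_card fun x hx => by
        obtain ⟨k, -, rfl⟩ := mem_image.1 hx
        exact hmem k

theorem add_two_le_card_of_isNestSet (hC : IsBetaCycle E l v e) (hN : IsNestSet E N)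
    {i : Fin (l + 3)} (hi : v i ∈ N) : l + 2 ≤ N.card := by
  by_cases hall : ∀ j, v j ∈ N
  · calc l + 2 ≤ (univ.image v).card := by
          rw [card_image_of_injective _ hC.1, card_univ, Fintype.card_fin]; omega
      _ ≤ N.card := card_le_card fun x hx => by
          obtain ⟨j, -, rfl⟩ := mem_image.1 hx
          exact hall j
  · have hpivot : ∃ k, v k ∉ N ∧ v (k + 1) ∈ N := by
      by_contra! hclosed
      obtain ⟨a, ha⟩ := not_forall.1 hall
      exact Fin.forall_of_forall_imp_add_one (P := fun j => v j ∉ N) ha hclosed i hi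
    obtain ⟨k, hk, hk1⟩ := hpivot
    refine (hC.rotate (k + 1)).add_two_le_card_of_isNestSet_of_mem_zero hN
      (by simpa using hk1) ?_
    rwa [add_left_comm, Fin.last_add_one, add_zero]

theorem reduce_of_forall_notMem (hC : IsBetaCycle E l v e) (hN : ∀ i, v i ∉ N) :
    IsBetaCycle (hreduce E N) l v (fun i => e i \ N) := by
  have hmem : ∀ i j, v i ∈ e j \ N ↔ (j = i ∨ j + 1 = i) := fun i j => by
    rw [mem_sdiff, hC.mem_edge_iff, and_iff_left (hN i)]
  refine ⟨hC.1, fun a b hab => ?_, fun i => ?_, hmem⟩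
  · replace hab : e a \ N = e b \ N := hab
    rcases (hmem a b).1 (hab ▸ (hmem a a).2 (Or.inl rfl)) with rfl | hba
    · rfl
    rcases (hmem (a + 1) b).1 (hab ▸ (hmem (a + 1) a).2 (Or.inr rfl)) with rfl | hb
    · rw [add_assoc, add_eq_left, Fin.ext_iff, Fin.val_add] at hba
      simp [Nat.mod_eq_of_lt (show 2 < l + 3 by omega)] at hba
    · exact (add_right_cancel hb).symm
  · refine mem_filter.2 ⟨mem_image_of_mem _ (hC.edge_mem i), ?_⟩
    exact one_lt_card.2 ⟨v i, (hmem i i).2 (Or.inl rfl), v (i + 1), (hmem _ i).2 (Or.inr rfl),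
      hC.1.ne (by simp)⟩

theorem exists_add_two_le_card (hC : IsBetaCycle E l v e) {L : List (Finset V)}
    (hL : ∀ i : Fin L.length, IsNestSet ((L.take i).foldl hreduce E) (L.get i))
    (hv : ∃ N ∈ L, ∃ i, v i ∈ N) : ∃ N ∈ L, l + 2 ≤ N.card := by
  induction L generalizing E e with
  | nil => simp at hv
  | cons N L ih =>
    by_cases hN : ∀ i, v i ∉ N
    · have hv' : ∃ N' ∈ L, ∃ i, v i ∈ N' := by
        obtain ⟨N', hN', i, hi⟩ := hv
        rcases List.mem_cons.1 hN' with rfl | hN'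
        · exact absurd hi (hN i)
        · exact ⟨N', hN', i, hi⟩
      obtain ⟨N', hN', hcard⟩ :=
        ih (hC.reduce_of_forall_notMem hN) (fun i => by simpa using hL i.succ) hv'
      exact ⟨N', List.mem_cons_of_mem _ hN', hcard⟩
    · obtain ⟨i, hi⟩ := not_forall_not.1 hN
      exact ⟨N, List.mem_cons_self, hC.add_two_le_card_of_isNestSet (by simpa using hL 0) hi⟩

end IsBetaCycle

/-- If a hypergraph `G = (Vs, E)` contains a β-cycle of length `ℓ = l + 3 ≥ 3`, then
`nsw(G) ≥ ℓ - 1`; i.e. every nest-set elimination order has an element of cardinality at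
least `ℓ - 1 = l + 2`. -/
theorem stmt_7 {V : Type*} [DecidableEq V] (Vs : Finset V) (E : Finset (Finset V))
    (hE : ∀ e ∈ E, e ⊆ Vs) (l : ℕ)
    (v : Fin (l + 3) → V) (e : Fin (l + 3) → Finset V)
    (hC : IsBetaCycle E l v e) :
    ∀ L : List (Finset V), IsElimOrder Vs E L → ∃ N ∈ L, l + 2 ≤ N.card := by
  rintro L ⟨-, -, hcover, hnest⟩
  have hv0 : v 0 ∈ L.foldr (· ∪ ·) ∅ := hcover ▸ hE _ (hC.edge_mem 0) (hC.mem_edge_self 0)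
  obtain ⟨N, hNL, hvN⟩ := List.mem_foldr_union_iff.1 hv0
  exact hC.exists_add_two_le_card hnest ⟨N, hNL, 0, hvN⟩
end

section
/- Let G = (V,E) be a hypergraph and let N₁ ⊆ V be a nest-set of G. Form the hypergraph Ḡ by replacing every edge e ∈ E with e ∩ N₁ ≠ ∅ by the edge e ∪ N₁ (keeping edges disjoint from N₁ unchanged, and removing duplicates). Then every node of N₁ is a nest point of Ḡ. -/
open Finset

/-- If `N` is a nest-set of `G = (V, E)`, and `Ḡ` is obtained by inflating every edge
meeting `N` to its union with `N`, then every node of `N` is a nest point of `Ḡ`. -/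
theorem stmt_13 {V : Type*} [DecidableEq V] (E : Finset (Finset V)) (N : Finset V)
    (hN : IsNestSet E N) :
    ∀ v ∈ N,
      IsNestPoint (E.image (fun e => if (e ∩ N).Nonempty then e ∪ N else e)) v := by
  intro v hv f₁ hf₁ f₂ hf₂ hv1 hv2
  simp only [mem_image] at hf₁ hf₂
  obtain ⟨e₁, he₁, rfl⟩ := hf₁
  obtain ⟨e₂, he₂, rfl⟩ := hf₂
  by_cases h1 : (e₁ ∩ N).Nonempty
  · by_cases h2 : (e₂ ∩ N).Nonempty
    · simp only [h1, h2, if_pos] at hv1 hv2 ⊢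
      rcases hN e₁ he₁ e₂ he₂ h1 h2 with h | h
      · left
        intro x hx
        rcases mem_union.1 hx with hx | hx
        · by_cases hxN : x ∈ N
          · exact mem_union_right _ hxN
          · exact mem_union_left _ (mem_sdiff.1 (h (mem_sdiff.2 ⟨hx, hxN⟩))).1
        · exact mem_union_right _ hx
      · right
        intro x hx
        rcases mem_union.1 hx with hx | hx
        · by_cases hxN : x ∈ N
          · exact mem_union_right _ hxN
          · exact mem_union_left _ (mem_sdiff.1 (h (mem_sdiff.2 ⟨hx, hxN⟩))).1
        · exact mem_union_right _ hx
    · simp only [h2, if_neg, not_false_iff] at hv2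
      exact absurd ⟨v, mem_inter.2 ⟨hv2, hv⟩⟩ h2
  · simp only [h1, if_neg, not_false_iff] at hv1
    exact absurd ⟨v, mem_inter.2 ⟨hv1, hv⟩⟩ h1
end
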